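/- Let Γ be a finitely generated abelian group and let J be a Hopf 2-cocycle for the group Hopf algebra ℂ[Γ] such that for every g ∈ Γ with g ≠ 1 there exists h ∈ Γ with J(g ⊗ h) ≠ J(h ⊗ g) (i.e. the alternating bicharacter λ(g,h) = J(g ⊗ h) J(h ⊗ g)⁻¹ is nondegenerate on Γ). Then the twisted algebra ℂ[Γ]_J is a simple ring (its only two-sided ideals are 0 and the whole ring). -/

import Mathlib

open TensorProduct

noncomputable section

namespace Twisting

/-- Convolution product of linear functionals on a coalgebra. -/
def conv {C : Type*} [AddCommMonoid C] [Module ℂ C] [CoalgebraStruct ℂ C]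
    (F G : C →ₗ[ℂ] ℂ) : C →ₗ[ℂ] ℂ :=
  LinearMap.mul' ℂ ℂ ∘ₗ TensorProduct.map F G ∘ₗ Coalgebra.comul

variable (A : Type*) [CommRing A] [HopfAlgebra ℂ A]

/-- A Hopf 2-cocycle for the Hopf algebra `A`:  a convolution-invertible linear functional
`J` on `A ⊗ A` satisfying the 2-cocycle identity
`Σ J(a₁b₁ ⊗ c) J(a₂ ⊗ b₂) = Σ J(a ⊗ b₁c₁) J(b₂ ⊗ c₂)` (expressed below as an equality of
linear functionals on `(A ⊗ A) ⊗ A`) and the normalization `J(a ⊗ 1) = ε(a) = J(1 ⊗ a)`. -/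
structure Hopf2Cocycle where
  J : A ⊗[ℂ] A →ₗ[ℂ] ℂ
  Jinv : A ⊗[ℂ] A →ₗ[ℂ] ℂ
  conv_right_inv : conv J Jinv = Coalgebra.counit
  conv_left_inv : conv Jinv J = Coalgebra.counit
  cocycle : conv (J ∘ₗ TensorProduct.map (LinearMap.mul' ℂ A) LinearMap.id)
        (LinearMap.mul' ℂ ℂ ∘ₗ TensorProduct.map J Coalgebra.counit)
      = conv (J ∘ₗ TensorProduct.map LinearMap.id (LinearMap.mul' ℂ A)
            ∘ₗ (TensorProduct.assoc ℂ A A A).toLinearMap)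
        (LinearMap.mul' ℂ ℂ ∘ₗ TensorProduct.map Coalgebra.counit J
            ∘ₗ (TensorProduct.assoc ℂ A A A).toLinearMap)
  norm_right : ∀ a : A, J (a ⊗ₜ[ℂ] 1) = Coalgebra.counit a
  norm_left : ∀ a : A, J ((1 : A) ⊗ₜ[ℂ] a) = Coalgebra.counit a

variable {A}

namespace Hopf2Cocycle

/-- The cotriangular form `R^J (a ⊗ b) = Σ J⁻¹(b₁ ⊗ a₁) J(a₂ ⊗ b₂)`. -/
def RJ (c : Hopf2Cocycle A) : A ⊗[ℂ] A →ₗ[ℂ] ℂ :=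
  conv (c.Jinv ∘ₗ (TensorProduct.comm ℂ A A).toLinearMap) c.J

/-- `J` is minimal if `R^J` is nondegenerate. -/
def Minimal (c : Hopf2Cocycle A) : Prop :=
  ∀ a : A, (∀ b : A, c.RJ (a ⊗ₜ[ℂ] b) = 0) → a = 0

/-- The multiplication `a ·_J b = Σ a₁b₁ J(a₂ ⊗ b₂)` of the twisted algebra `A_J`. -/
def mulJ (c : Hopf2Cocycle A) : A ⊗[ℂ] A →ₗ[ℂ] A :=
  (TensorProduct.rid ℂ A).toLinearMap
    ∘ₗ TensorProduct.map (LinearMap.mul' ℂ A) c.J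
    ∘ₗ Coalgebra.comul

end Hopf2Cocycle

/-- Gauge equivalence of Hopf 2-cocycles, at the level of the underlying bilinear forms:
`J'(a ⊗ b) = Σ x(a₁) x(b₁) J(a₂ ⊗ b₂) x⁻¹(a₃b₃)` for some convolution-invertible
linear functional `x` with `x(1) = 1`. -/
def GaugeEquiv (J J' : A ⊗[ℂ] A →ₗ[ℂ] ℂ) : Prop :=
  ∃ x xinv : A →ₗ[ℂ] ℂ,
    conv x xinv = Coalgebra.counit ∧ conv xinv x = Coalgebra.counit ∧
    x 1 = 1 ∧
    J' = conv (LinearMap.mul' ℂ ℂ ∘ₗ TensorProduct.map x x)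
           (conv J (xinv ∘ₗ LinearMap.mul' ℂ A))

/-- A realization of the twisted algebra `A_J` as an honest (possibly noncommutative)
`ℂ`-algebra `B`: a linear isomorphism matching the twisted multiplication `·_J` with the
multiplication of `B` and preserving units. -/
structure TwistedModel (c : Hopf2Cocycle A) (B : Type*) [Ring B] [Algebra ℂ B] where
  e : A ≃ₗ[ℂ] B
  map_one : e 1 = 1
  map_mul : ∀ a b : A, e (c.mulJ (a ⊗ₜ[ℂ] b)) = e a * e b


/-- A realization of the commutative Hopf `ℂ`-algebra `A` as the group Hopf algebra
`ℂ[Γ]` of the (multiplicative) abelian group `Γ`: a monoid homomorphism `of : Γ → A`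
whose image is a `ℂ`-basis of `A` consisting of grouplike elements, with
`S(of g) = of g⁻¹`. -/
structure GroupLikeBasis (Γ : Type*) [CommGroup Γ] (A : Type*) [CommRing A]
    [HopfAlgebra ℂ A] where
  of : Γ →* A
  basis : Module.Basis Γ ℂ A
  basis_eq : ∀ g : Γ, basis g = of g
  comul_of : ∀ g : Γ, Coalgebra.comul (R := ℂ) (of g) = of g ⊗ₜ[ℂ] of g
  counit_of : ∀ g : Γ, Coalgebra.counit (R := ℂ) (of g) = (1 : ℂ)
  antipode_of : ∀ g : Γ, HopfAlgebra.antipode (R := ℂ) (of g) = of g⁻¹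

/-- `Γ` is a free abelian group of finite rank. -/
def IsFreeAbelianOfFiniteRank (Γ : Type*) [CommGroup Γ] : Prop :=
  ∃ n : ℕ, Nonempty (Γ ≃* Multiplicative (Fin n → ℤ))

/-!
In `ℂ[Γ]_J` the basis vectors multiply as `u_g · u_h = σ(g,h) u_{gh}` with `σ(g,h) = J(g ⊗ h)`,
and conjugation by `u_h` rescales `u_g` by `λ(h,g) σ(h,h⁻¹)`, where `λ(h,g) = σ(h,g)/σ(g,h)` is
multiplicative in `g` by the cocycle identity. If a nonzero element `x` of an ideal has two
coordinates `g₁ ≠ g₂`, nondegeneracy gives `h` with `λ(h, g₂g₁⁻¹) ≠ 1`, and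
`λ(h,g₁) σ(h,h⁻¹) x - u_h x u_{h⁻¹}` is a nonzero element of the ideal with smaller support.
Hence the ideal contains a nonzero multiple of some `u_g`, which is invertible, and so contains `1`.
-/

lemma _root_.IsGroupLikeElem.tmul {R C D : Type*} [CommSemiring R] [AddCommMonoid C] [Module R C]
    [Coalgebra R C] [AddCommMonoid D] [Module R D] [Coalgebra R D] {a : C} {b : D}
    (ha : IsGroupLikeElem R a) (hb : IsGroupLikeElem R b) : IsGroupLikeElem R (a ⊗ₜ[R] b) where
  counit_eq_one := by simp [ha.counit_eq_one, hb.counit_eq_one]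
  comul_eq_tmul_self := by simp [ha.comul_eq_tmul_self, hb.comul_eq_tmul_self]

lemma conv_apply_of_isGroupLikeElem {C : Type*} [AddCommMonoid C] [Module ℂ C] [Coalgebra ℂ C]
    (F G : C →ₗ[ℂ] ℂ) {x : C} (hx : IsGroupLikeElem ℂ x) : conv F G x = F x * G x := by
  simp [conv, hx.comul_eq_tmul_self]

namespace Hopf2Cocycle

variable {A : Type*} [CommRing A] [HopfAlgebra ℂ A] (c : Hopf2Cocycle A)

lemma J_ne_zero_of_isGroupLikeElem {t : A ⊗[ℂ] A} (ht : IsGroupLikeElem ℂ t) : c.J t ≠ 0 := by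
  have := congr($(c.conv_right_inv) t)
  rw [conv_apply_of_isGroupLikeElem _ _ ht, ht.counit_eq_one] at this
  exact left_ne_zero_of_mul_eq_one this

lemma J_cocycle_of_isGroupLikeElem {a b d : A} (ha : IsGroupLikeElem ℂ a)
    (hb : IsGroupLikeElem ℂ b) (hd : IsGroupLikeElem ℂ d) :
    c.J ((a * b) ⊗ₜ d) * c.J (a ⊗ₜ b) = c.J (a ⊗ₜ (b * d)) * c.J (b ⊗ₜ d) := by
  have := congr($(c.cocycle) ((a ⊗ₜ[ℂ] b) ⊗ₜ[ℂ] d))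
  rw [conv_apply_of_isGroupLikeElem _ _ ((ha.tmul hb).tmul hd),
    conv_apply_of_isGroupLikeElem _ _ ((ha.tmul hb).tmul hd)] at this
  simpa [ha.counit_eq_one, hb.counit_eq_one, hd.counit_eq_one] using this

lemma mulJ_tmul_of_isGroupLikeElem {a b : A} (ha : IsGroupLikeElem ℂ a)
    (hb : IsGroupLikeElem ℂ b) : c.mulJ (a ⊗ₜ b) = c.J (a ⊗ₜ b) • (a * b) := by
  simp [mulJ, ha.comul_eq_tmul_self, hb.comul_eq_tmul_self]

lemma mulJ_one_tmul (x : A) : c.mulJ (1 ⊗ₜ x) = x := by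
  suffices h : ∀ t : A ⊗[ℂ] A, TensorProduct.rid ℂ A (map (LinearMap.mul' ℂ A) c.J
      (AlgebraTensorModule.tensorTensorTensorComm ℂ ℂ ℂ ℂ A A A A (1 ⊗ₜ t)))
      = TensorProduct.rid ℂ A (Coalgebra.counit.lTensor A t) by
    simp [mulJ, h, Coalgebra.lTensor_counit_comul]
  intro t
  induction t using TensorProduct.induction_on with
  | zero => simp
  | tmul a b => simp [Algebra.TensorProduct.one_def, c.norm_left]
  | add s t hs ht => simp only [tmul_add, map_add, hs, ht]

lemma mulJ_tmul_one (x : A) : c.mulJ (x ⊗ₜ 1) = x := by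
  suffices h : ∀ t : A ⊗[ℂ] A, TensorProduct.rid ℂ A (map (LinearMap.mul' ℂ A) c.J
      (AlgebraTensorModule.tensorTensorTensorComm ℂ ℂ ℂ ℂ A A A A (t ⊗ₜ 1)))
      = TensorProduct.rid ℂ A (Coalgebra.counit.lTensor A t) by
    simp [mulJ, h, Coalgebra.lTensor_counit_comul]
  intro t
  induction t using TensorProduct.induction_on with
  | zero => simp
  | tmul a b => simp [Algebra.TensorProduct.one_def, c.norm_right]
  | add s t hs ht => simp only [add_tmul, map_add, hs, ht]

def IsTwoSidedIdeal (I : AddSubgroup A) : Prop :=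
  ∀ x ∈ I, ∀ a : A, c.mulJ (a ⊗ₜ x) ∈ I ∧ c.mulJ (x ⊗ₜ a) ∈ I

variable {c} {I : AddSubgroup A}

lemma IsTwoSidedIdeal.smul_mem (hI : c.IsTwoSidedIdeal I) {x : A} (hx : x ∈ I) (d : ℂ) :
    d • x ∈ I := by
  simpa only [← smul_tmul', map_smul, c.mulJ_one_tmul] using (hI x hx (d • 1)).1

lemma IsTwoSidedIdeal.eq_top_of_one_mem (hI : c.IsTwoSidedIdeal I) (h₁ : (1 : A) ∈ I) :
    I = ⊤ :=
  (AddSubgroup.eq_top_iff' I).2 fun a ↦ by simpa only [c.mulJ_tmul_one] using (hI 1 h₁ a).1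

end Hopf2Cocycle

section ScalarCocycle

variable {Γ K : Type*} [Field K] {σ : Γ → Γ → K}

def IsTwoCocycle [Mul Γ] (σ : Γ → Γ → K) : Prop :=
  ∀ g h k, σ (g * h) k * σ g h = σ g (h * k) * σ h k

def altBicharacter (σ : Γ → Γ → K) (g h : Γ) : K := σ g h / σ h g

lemma altBicharacter_eq_one_iff {g h : Γ} (hne : σ h g ≠ 0) :
    altBicharacter σ g h = 1 ↔ σ g h = σ h g :=
  div_eq_one_iff_eq hne

lemma altBicharacter_mul_right [CommGroup Γ] (hσ : IsTwoCocycle σ) (hne : ∀ g h, σ g h ≠ 0)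
    (h g₁ g₂ : Γ) :
    altBicharacter σ h (g₁ * g₂) = altBicharacter σ h g₁ * altBicharacter σ h g₂ := by
  have e₁ := hσ h g₁ g₂
  have e₂ := hσ g₁ g₂ h
  have e₃ := hσ g₁ h g₂
  rw [mul_comm g₂ h] at e₂
  rw [mul_comm g₁ h] at e₃
  have key : σ h (g₁ * g₂) * (σ g₁ h * σ g₂ h) = σ h g₁ * σ h g₂ * σ (g₁ * g₂) h := by
    apply mul_left_cancel₀ (hne g₁ g₂)
    linear_combination (σ g₁ h * σ g₂ h) * e₁.symm + (σ h g₁ * σ g₂ h) * e₃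
      - (σ h g₁ * σ h g₂) * e₂
  unfold altBicharacter
  field_simp [hne g₁ h, hne g₂ h, hne (g₁ * g₂) h]
  linear_combination key

lemma altBicharacter_ne_of_ne_one [CommGroup Γ] (hσ : IsTwoCocycle σ) (hne : ∀ g h, σ g h ≠ 0)
    {h g₁ g₂ : Γ} (hlam : altBicharacter σ h (g₂ * g₁⁻¹) ≠ 1) :
    altBicharacter σ h g₁ ≠ altBicharacter σ h g₂ := by
  intro heq
  have hg₂ := altBicharacter_mul_right hσ hne h (g₂ * g₁⁻¹) g₁
  rw [inv_mul_cancel_right, ← heq] at hg₂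
  refine hlam (mul_right_cancel₀ (div_ne_zero (hne h g₁) (hne g₁ h)) ?_)
  rw [one_mul]
  exact hg₂.symm

/-- The scalar by which conjugation by `u_h` acts on `u_g` in the twisted group algebra. -/
lemma mul_mul_inv_eq_altBicharacter_mul [CommGroup Γ]
    (hσ : IsTwoCocycle σ) (hne : ∀ g h, σ g h ≠ 0) (hσ₁ : ∀ g, σ g 1 = 1) (h g : Γ) :
    σ h g * σ (h * g) h⁻¹ = altBicharacter σ h g * σ h h⁻¹ := by
  have key : σ (h * g) h⁻¹ * σ g h = σ h h⁻¹ := by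
    simpa [hσ₁, mul_comm g h] using hσ g h h⁻¹
  rw [altBicharacter, ← key]
  field_simp [hne g h]

end ScalarCocycle

namespace GroupLikeBasis

variable {Γ : Type*} [CommGroup Γ] {A : Type*} [CommRing A] [HopfAlgebra ℂ A]
  (gb : GroupLikeBasis Γ A) (c : Hopf2Cocycle A)

lemma isGroupLikeElem_of (g : Γ) : IsGroupLikeElem ℂ (gb.of g) :=
  ⟨gb.counit_of g, gb.comul_of g⟩

def cocycle (g h : Γ) : ℂ := c.J (gb.of g ⊗ₜ gb.of h)

lemma cocycle_ne_zero (g h : Γ) : gb.cocycle c g h ≠ 0 :=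
  c.J_ne_zero_of_isGroupLikeElem ((gb.isGroupLikeElem_of g).tmul (gb.isGroupLikeElem_of h))

lemma cocycle_one_right (g : Γ) : gb.cocycle c g 1 = 1 := by
  rw [cocycle, map_one, c.norm_right, gb.counit_of]

lemma isTwoCocycle_cocycle : IsTwoCocycle (gb.cocycle c) := fun g h k ↦ by
  simpa only [cocycle, map_mul] using c.J_cocycle_of_isGroupLikeElem
    (gb.isGroupLikeElem_of g) (gb.isGroupLikeElem_of h) (gb.isGroupLikeElem_of k)

lemma mulJ_of_tmul_of (g h : Γ) :
    c.mulJ (gb.of g ⊗ₜ gb.of h) = gb.cocycle c g h • gb.of (g * h) := by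
  rw [c.mulJ_tmul_of_isGroupLikeElem (gb.isGroupLikeElem_of g) (gb.isGroupLikeElem_of h),
    map_mul, cocycle]

lemma repr_mulJ_conj (h g : Γ) (x : A) :
    gb.basis.repr (c.mulJ (c.mulJ (gb.of h ⊗ₜ x) ⊗ₜ gb.of h⁻¹)) g
      = altBicharacter (gb.cocycle c) h g * gb.cocycle c h h⁻¹ * gb.basis.repr x g := by
  rw [← mul_mul_inv_eq_altBicharacter_mul (gb.isTwoCocycle_cocycle c) (gb.cocycle_ne_zero c)
    (gb.cocycle_one_right c)]
  have key : gb.basis.coord g ∘ₗ c.mulJ ∘ₗ (TensorProduct.mk ℂ A A).flip (gb.of h⁻¹)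
        ∘ₗ c.mulJ ∘ₗ TensorProduct.mk ℂ A A (gb.of h)
      = (gb.cocycle c h g * gb.cocycle c (h * g) h⁻¹) • gb.basis.coord g := by
    refine gb.basis.ext fun g' ↦ ?_
    have hconj : h * g' * h⁻¹ = g' := by rw [mul_comm h g', mul_inv_cancel_right]
    simp only [LinearMap.comp_apply, TensorProduct.mk_apply, LinearMap.flip_apply,
      LinearMap.smul_apply, gb.basis_eq, mulJ_of_tmul_of, map_smul, hconj]
    simp only [← gb.basis_eq, Module.Basis.coord_apply, Module.Basis.repr_self, smul_eq_mul]
    rcases eq_or_ne g' g with rfl | hg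
    · simp
    · simp [hg]
  simpa using congr($key x)

variable {c} {I : AddSubgroup A}

lemma one_mem_of_smul_of_mem (hI : c.IsTwoSidedIdeal I) {g : Γ} {b : ℂ} (hb : b ≠ 0)
    (hbg : b • gb.of g ∈ I) : (1 : A) ∈ I := by
  have hb' : b * gb.cocycle c g g⁻¹ ≠ 0 := mul_ne_zero hb (gb.cocycle_ne_zero c g g⁻¹)
  have h := hI.smul_mem (hI _ hbg (gb.of g⁻¹)).2 (b * gb.cocycle c g g⁻¹)⁻¹
  rwa [← smul_tmul', map_smul, mulJ_of_tmul_of, mul_inv_cancel, map_one, smul_smul b,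
    inv_smul_smul₀ hb'] at h

lemma exists_mem_card_support_lt
    (hnd : ∀ g : Γ, g ≠ 1 → ∃ h : Γ, gb.cocycle c g h ≠ gb.cocycle c h g)
    (hI : c.IsTwoSidedIdeal I) {x : A} (hx : x ∈ I) {g₁ g₂ : Γ}
    (hg₁ : g₁ ∈ (gb.basis.repr x).support) (hg₂ : g₂ ∈ (gb.basis.repr x).support)
    (hne : g₁ ≠ g₂) :
    ∃ z ∈ I, z ≠ 0 ∧ (gb.basis.repr z).support.card < (gb.basis.repr x).support.card := by
  classical
  set σ := gb.cocycle c
  obtain ⟨h, hh⟩ := hnd (g₂ * g₁⁻¹) (mul_inv_eq_one.not.2 hne.symm)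
  have hsep : altBicharacter σ h g₁ ≠ altBicharacter σ h g₂ :=
    altBicharacter_ne_of_ne_one (gb.isTwoCocycle_cocycle c) (gb.cocycle_ne_zero c)
      ((altBicharacter_eq_one_iff (gb.cocycle_ne_zero c _ _)).not.2 (Ne.symm hh))
  set z := (altBicharacter σ h g₁ * σ h h⁻¹) • x
    - c.mulJ (c.mulJ (gb.of h ⊗ₜ x) ⊗ₜ gb.of h⁻¹) with hz
  have hzI : z ∈ I := I.sub_mem (hI.smul_mem hx _) (hI _ (hI x hx _).1 _).2
  have hrepr (g : Γ) : gb.basis.repr z g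
      = (altBicharacter σ h g₁ - altBicharacter σ h g) * σ h h⁻¹ * gb.basis.repr x g := by
    rw [hz, map_sub, Finsupp.sub_apply, map_smul, Finsupp.smul_apply, repr_mulJ_conj,
      smul_eq_mul]
    ring
  have hsupp : (gb.basis.repr z).support ⊆ (gb.basis.repr x).support.erase g₁ := by
    intro g hg
    rw [Finsupp.mem_support_iff, hrepr] at hg
    exact Finset.mem_erase.2 ⟨by rintro rfl; simp at hg,
      Finsupp.mem_support_iff.2 (right_ne_zero_of_mul hg)⟩
  refine ⟨z, hzI, fun hz0 ↦ ?_, (Finset.card_le_card hsupp).trans_lt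
    (Finset.card_erase_lt_of_mem hg₁)⟩
  have := hrepr g₂
  rw [hz0, map_zero, Finsupp.zero_apply] at this
  exact mul_ne_zero (mul_ne_zero (sub_ne_zero.2 hsep) (gb.cocycle_ne_zero c h h⁻¹))
    (Finsupp.mem_support_iff.1 hg₂) this.symm

lemma exists_smul_of_mem_ne_zero
    (hnd : ∀ g : Γ, g ≠ 1 → ∃ h : Γ, gb.cocycle c g h ≠ gb.cocycle c h g)
    (hI : c.IsTwoSidedIdeal I) {x : A} (hx : x ∈ I) (hx₀ : x ≠ 0) :
    ∃ (g : Γ) (b : ℂ), b ≠ 0 ∧ b • gb.of g ∈ I := by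
  induction hn : (gb.basis.repr x).support.card using Nat.strong_induction_on generalizing x
    with | _ n ih =>
  obtain ⟨g₁, hg₁⟩ : (gb.basis.repr x).support.Nonempty := by
    simpa [Finsupp.support_nonempty_iff] using hx₀
  by_cases hmono : (gb.basis.repr x).support ⊆ {g₁}
  · refine ⟨g₁, gb.basis.repr x g₁, Finsupp.mem_support_iff.1 hg₁, ?_⟩
    rwa [← gb.basis_eq, ← Module.Basis.repr_symm_single,
      ← Finsupp.support_subset_singleton.1 hmono, LinearEquiv.symm_apply_apply]
  · obtain ⟨g₂, hg₂, hne⟩ := Finset.not_subset.1 hmono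
    obtain ⟨z, hzI, hz₀, hlt⟩ :=
      gb.exists_mem_card_support_lt hnd hI hx hg₁ hg₂ (Ne.symm (Finset.mem_singleton.not.1 hne))
    exact ih _ (hn ▸ hlt) hzI hz₀ rfl

end GroupLikeBasis

theorem statement12_general (Γ : Type*) [CommGroup Γ]
    (A : Type*) [CommRing A] [HopfAlgebra ℂ A] (gb : GroupLikeBasis Γ A)
    (c : Hopf2Cocycle A)
    (hnd : ∀ g : Γ, g ≠ 1 →
      ∃ h : Γ, c.J (gb.of g ⊗ₜ[ℂ] gb.of h) ≠ c.J (gb.of h ⊗ₜ[ℂ] gb.of g)) :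
    ∀ I : AddSubgroup A,
      (∀ x ∈ I, ∀ a : A, c.mulJ (a ⊗ₜ[ℂ] x) ∈ I ∧ c.mulJ (x ⊗ₜ[ℂ] a) ∈ I) →
      I = ⊥ ∨ I = ⊤ := by
  intro I (hI : c.IsTwoSidedIdeal I)
  refine I.bot_or_exists_ne_zero.imp_right fun ⟨x, hx, hx₀⟩ ↦ ?_
  obtain ⟨g, b, hb, hbg⟩ := gb.exists_smul_of_mem_ne_zero hnd hI hx hx₀
  exact hI.eq_top_of_one_mem (gb.one_mem_of_smul_of_mem hI hb hbg)

/-- Let `Γ` be a finitely generated abelian group and `J` a Hopf 2-cocycle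
for `ℂ[Γ]` whose associated alternating bicharacter `λ(g,h) = J(g ⊗ h)J(h ⊗ g)⁻¹` is
nondegenerate.  Then the twisted algebra `ℂ[Γ]_J` is a simple ring: its only two-sided
ideals are `0` and the whole ring. -/
theorem statement12 (Γ : Type*) [CommGroup Γ] (hfg : Group.FG Γ)
    (A : Type*) [CommRing A] [HopfAlgebra ℂ A] (gb : GroupLikeBasis Γ A)
    (c : Hopf2Cocycle A)
    (hnd : ∀ g : Γ, g ≠ 1 →
      ∃ h : Γ, c.J (gb.of g ⊗ₜ[ℂ] gb.of h) ≠ c.J (gb.of h ⊗ₜ[ℂ] gb.of g)) :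
    ∀ I : AddSubgroup A,
      (∀ x ∈ I, ∀ a : A, c.mulJ (a ⊗ₜ[ℂ] x) ∈ I ∧ c.mulJ (x ⊗ₜ[ℂ] a) ∈ I) →
      I = ⊥ ∨ I = ⊤ :=
  statement12_general Γ A gb c hnd

end Twisting
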